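/- arXiv:2406.10262 — 3 statements merged into one kernel-verified Lean document; each statement's English description precedes it below -/
import Mathlib

section
/- For any matrix X with strictly positive entries x_{ik} > 0 satisfying the stochastic constraints ∑_k x_{ik} = 1 for all i and ∑_i x_{ik} = 1 for all k ∈ [m−1], there exists a cost matrix C (namely c_{ik} = −ε log x_{ik}) such that X is the unique optimal solution of the entropy-regularized optimal transport problem with cost C over the same constraint set. -/
lemma key_le (a b : ℝ) (ha : 0 < a) (hb : 0 < b) :
    a - b ≤ a * (Real.log a - Real.log b) := by
  have h := Real.log_le_sub_one_of_pos (div_pos hb ha)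
  rw [Real.log_div hb.ne' ha.ne'] at h
  have h2 := mul_le_mul_of_nonneg_left h ha.le
  have h3 : a * (b / a - 1) = b - a := by field_simp
  nlinarith [h2]

lemma key_lt (a b : ℝ) (ha : 0 < a) (hb : 0 < b) (hne : a ≠ b) :
    a - b < a * (Real.log a - Real.log b) := by
  have hne1 : b / a ≠ 1 := by
    intro h
    rw [div_eq_one_iff_eq ha.ne'] at h
    exact hne h.symm
  have h := Real.log_lt_sub_one_of_pos (div_pos hb ha) hne1
  rw [Real.log_div hb.ne' ha.ne'] at h
  have h2 := mul_lt_mul_of_pos_left h ha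
  have h3 : a * (b / a - 1) = b - a := by field_simp
  nlinarith [h2]

theorem exists_cost_making_unique_optimum
    {I : Type*} [Fintype I] (m : ℕ) (ε : ℝ) (hε : 0 < ε)
    (X : I → Fin m → ℝ)
    (hpos : ∀ i k, 0 < X i k)
    (hrow : ∀ i, ∑ k, X i k = 1)
    (hcol : ∀ k : Fin m, (k : ℕ) < m - 1 → ∑ i, X i k = 1) :
    ∃ C : I → Fin m → ℝ, (C = fun i k => -ε * Real.log (X i k)) ∧
      ∀ Y : I → Fin m → ℝ,
        (∀ i k, 0 < Y i k) →
        (∀ i, ∑ k, Y i k = 1) →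
        (∀ k : Fin m, (k : ℕ) < m - 1 → ∑ i, Y i k = 1) →
        ((∑ i, ∑ k, C i k * X i k) + ε * ∑ i, ∑ k, X i k * (Real.log (X i k) - 1)
            ≤ (∑ i, ∑ k, C i k * Y i k) + ε * ∑ i, ∑ k, Y i k * (Real.log (Y i k) - 1)) ∧
        (Y ≠ X →
          (∑ i, ∑ k, C i k * X i k) + ε * ∑ i, ∑ k, X i k * (Real.log (X i k) - 1)
            < (∑ i, ∑ k, C i k * Y i k) + ε * ∑ i, ∑ k, Y i k * (Real.log (Y i k) - 1)) := by
  refine ⟨fun i k => -ε * Real.log (X i k), rfl, fun Y hYpos hYrow _ => ?_⟩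
  -- Rewrite the objective of any Z as a single double sum
  have hexp : ∀ Z : I → Fin m → ℝ,
      (∑ i, ∑ k, (-ε * Real.log (X i k)) * Z i k)
        + ε * ∑ i, ∑ k, Z i k * (Real.log (Z i k) - 1)
      = ∑ i, ∑ k, ε * (Z i k * (Real.log (Z i k) - Real.log (X i k)) - Z i k) := by
    intro Z
    rw [Finset.mul_sum, ← Finset.sum_add_distrib]
    refine Finset.sum_congr rfl fun i _ => ?_
    rw [Finset.mul_sum, ← Finset.sum_add_distrib]
    exact Finset.sum_congr rfl fun k _ => by ring
  have hdiff :
      ((∑ i, ∑ k, (-ε * Real.log (X i k)) * Y i k)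
          + ε * ∑ i, ∑ k, Y i k * (Real.log (Y i k) - 1))
        - ((∑ i, ∑ k, (-ε * Real.log (X i k)) * X i k)
          + ε * ∑ i, ∑ k, X i k * (Real.log (X i k) - 1))
      = ∑ i, ∑ k, ε * (Y i k * (Real.log (Y i k) - Real.log (X i k)) - (Y i k - X i k)) := by
    rw [hexp Y, hexp X, ← Finset.sum_sub_distrib]
    refine Finset.sum_congr rfl fun i _ => ?_
    rw [← Finset.sum_sub_distrib]
    exact Finset.sum_congr rfl fun k _ => by ring
  have hterm_nonneg : ∀ i k,
      0 ≤ ε * (Y i k * (Real.log (Y i k) - Real.log (X i k)) - (Y i k - X i k)) := by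
    intro i k
    have := key_le (Y i k) (X i k) (hYpos i k) (hpos i k)
    nlinarith
  constructor
  · have h0 : 0 ≤ ∑ i, ∑ k, ε * (Y i k * (Real.log (Y i k) - Real.log (X i k)) - (Y i k - X i k)) :=
      Finset.sum_nonneg fun i _ => Finset.sum_nonneg fun k _ => hterm_nonneg i k
    linarith [hdiff ▸ h0]
  · intro hne
    obtain ⟨i₀, k₀, hne0⟩ : ∃ i k, Y i k ≠ X i k := by
      by_contra h
      push_neg at h
      exact hne (funext fun i => funext fun k => h i k)
    have hpos0 : 0 < ∑ i, ∑ k, ε * (Y i k * (Real.log (Y i k) - Real.log (X i k)) - (Y i k - X i k)) := by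
      refine Finset.sum_pos' (fun i _ => Finset.sum_nonneg fun k _ => hterm_nonneg i k)
        ⟨i₀, Finset.mem_univ _, ?_⟩
      refine Finset.sum_pos' (fun k _ => hterm_nonneg i₀ k) ⟨k₀, Finset.mem_univ _, ?_⟩
      have := key_lt (Y i₀ k₀) (X i₀ k₀) (hYpos i₀ k₀) (hpos i₀ k₀) hne0
      nlinarith
    linarith [hdiff ▸ hpos0]
end

section
/- If two entrywise-positive matrices X and Y have the same row sums and the same column sums, and both have the form X = diag(u) K diag(v), Y = diag(u') K diag(v') for the same entrywise-positive kernel K, then X = Y. -/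
theorem sinkhorn_scaling_unique
    (n m : ℕ) (K : Fin n → Fin m → ℝ) (hK : ∀ i j, 0 < K i j)
    (u u' : Fin n → ℝ) (hu : ∀ i, 0 < u i) (hu' : ∀ i, 0 < u' i)
    (v v' : Fin m → ℝ) (hv : ∀ j, 0 < v j) (hv' : ∀ j, 0 < v' j)
    (hrow : ∀ i, ∑ j, u i * K i j * v j = ∑ j, u' i * K i j * v' j)
    (hcol : ∀ j, ∑ i, u i * K i j * v j = ∑ i, u' i * K i j * v' j) :
    ∀ i j, u i * K i j * v j = u' i * K i j * v' j := by
  intro i0 j0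
  set X : Fin n → Fin m → ℝ := fun i j => u i * K i j * v j with hXdef
  have hXpos : ∀ i j, 0 < X i j := fun i j =>
    mul_pos (mul_pos (hu i) (hK i j)) (hv j)
  set a : Fin n → ℝ := fun i => u' i / u i with hadef
  set b : Fin m → ℝ := fun j => v' j / v j with hbdef
  have ha : ∀ i, 0 < a i := fun i => div_pos (hu' i) (hu i)
  have hb : ∀ j, 0 < b j := fun j => div_pos (hv' j) (hv j)
  have hY : ∀ i j, u' i * K i j * v' j = a i * b j * X i j := by
    intro i j
    have h1 : u i ≠ 0 := (hu i).ne'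
    have h2 : v j ≠ 0 := (hv j).ne'
    simp only [hadef, hbdef, hXdef]
    field_simp
  have hrow' : ∀ i, ∑ j, X i j = a i * ∑ j, b j * X i j := by
    intro i
    rw [Finset.mul_sum]
    calc ∑ j, X i j = ∑ j, u' i * K i j * v' j := hrow i
    _ = ∑ j, a i * (b j * X i j) := by
        refine Finset.sum_congr rfl fun j _ => ?_
        rw [hY i j]; ring
  have hcol' : ∀ j, ∑ i, X i j = b j * ∑ i, a i * X i j := by
    intro j
    rw [Finset.mul_sum]
    calc ∑ i, X i j = ∑ i, u' i * K i j * v' j := hcol j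
    _ = ∑ i, b j * (a i * X i j) := by
        refine Finset.sum_congr rfl fun i _ => ?_
        rw [hY i j]; ring
  -- pick the maximizer of b
  obtain ⟨jm, _, hjm⟩ := Finset.exists_max_image Finset.univ b ⟨j0, Finset.mem_univ j0⟩
  set c : ℝ := b jm with hcdef
  have hc : 0 < c := hb jm
  have hbc : ∀ j, b j ≤ c := fun j => hjm j (Finset.mem_univ j)
  have hSpos : ∀ i, 0 < ∑ j, X i j := fun i =>
    Finset.sum_pos (fun j _ => hXpos i j) ⟨j0, Finset.mem_univ j0⟩
  -- step A : 1 ≤ c * a i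
  have hA : ∀ i, 1 ≤ c * a i := by
    intro i
    have h1 : ∑ j, X i j ≤ a i * ∑ j, c * X i j := by
      rw [hrow' i]
      refine mul_le_mul_of_nonneg_left ?_ (ha i).le
      refine Finset.sum_le_sum fun j _ => ?_
      exact mul_le_mul_of_nonneg_right (hbc j) (hXpos i j).le
    have h2 : ∑ j, c * X i j = c * ∑ j, X i j := (Finset.mul_sum _ _ _).symm
    rw [h2] at h1
    have := hSpos i
    nlinarith
  -- step B : c * a i = 1 for all i
  have hB : ∀ i, c * a i = 1 := by
    have hsum : ∑ i, (c * a i) * X i jm = ∑ i, 1 * X i jm := by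
      have := hcol' jm
      rw [Finset.mul_sum] at this
      calc ∑ i, (c * a i) * X i jm = ∑ i, c * (a i * X i jm) := by
            refine Finset.sum_congr rfl fun i _ => ?_; ring
      _ = ∑ i, X i jm := this.symm
      _ = ∑ i, 1 * X i jm := by simp
    intro i
    by_contra hne
    have hlt : 1 < c * a i := lt_of_le_of_ne (hA i) (Ne.symm hne)
    have : ∑ i, 1 * X i jm < ∑ i, (c * a i) * X i jm := by
      refine Finset.sum_lt_sum (fun k _ => ?_) ⟨i, Finset.mem_univ i, ?_⟩
      · exact mul_le_mul_of_nonneg_right (hA k) (hXpos k jm).le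
      · exact mul_lt_mul_of_pos_right hlt (hXpos i jm)
    linarith [hsum]
  -- step C : b j = c for all j
  have hC : ∀ j, b j = c := by
    have hsum : ∑ j, b j * X i0 j = ∑ j, c * X i0 j := by
      have h1 := hrow' i0
      have h2 : a i0 = 1 / c := by
        have := hB i0; field_simp; linarith [this]
      rw [h2] at h1
      have h3 : ∑ j, b j * X i0 j = c * ∑ j, X i0 j := by
        field_simp at h1; linarith
      rw [h3, Finset.mul_sum]
    intro j
    by_contra hne
    have hlt : b j < c := lt_of_le_of_ne (hbc j) hne
    have : ∑ j, b j * X i0 j < ∑ j, c * X i0 j := by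
      refine Finset.sum_lt_sum (fun k _ => ?_) ⟨j, Finset.mem_univ j, ?_⟩
      · exact mul_le_mul_of_nonneg_right (hbc k) (hXpos i0 k).le
      · exact mul_lt_mul_of_pos_right hlt (hXpos i0 j)
    linarith [hsum]
  -- conclude
  have hab : a i0 * b j0 = 1 := by
    have h1 := hB i0
    have h2 := hC j0
    rw [h2]
    nlinarith
  calc u i0 * K i0 j0 * v j0 = X i0 j0 := rfl
  _ = a i0 * b j0 * X i0 j0 := by rw [hab]; ring
  _ = u' i0 * K i0 j0 * v' j0 := (hY i0 j0).symm
end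

section
/- Strong duality / dual characterization: X is the minimizer of the entropy-regularized OT problem over the positive transport polytope if and only if there exist potentials α : I → ℝ and β : [m] → ℝ (with β_m = 0 allowed as normalization for the dummy column) such that x_{ik} = exp((α_i + β_k − c_{ik})/ε) and X satisfies the marginal constraints. -/
/-! The objective is convex on the positive orthant with gradient `c + ε log X`, and the feasible
set is an open piece of an affine subspace whose direction space consists of the matrices with
vanishing row and column sums (the unconstrained last column sum is forced by the total mass).
So `X` is a minimizer iff its gradient is orthogonal to that space. Testing against the
matrices `(eᵢ - eⱼ) ⊗ (eₖ - eₗ)` shows this happens iff the gradient splits as `αᵢ + βₖ`, which is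
the exponential form of `X`; conversely such a split makes the tangent-line inequality for
`y ↦ y (log y - 1)` sum up to minimality. -/

open Finset Filter Topology Real

lemma exists_eq_add_of_add_eq_add {I K M : Type*} [AddCommGroup M] (g : I → K → M)
    (h : ∀ i j k l, g i k + g j l = g i l + g j k) :
    ∃ (α : I → M) (β : K → M), ∀ i k, g i k = α i + β k := by
  rcases isEmpty_or_nonempty I with hI | ⟨⟨i₀⟩⟩
  · exact ⟨0, 0, fun i => isEmptyElim i⟩
  rcases isEmpty_or_nonempty K with hK | ⟨⟨k₀⟩⟩
  · exact ⟨0, 0, fun _ k => isEmptyElim k⟩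
  refine ⟨fun i => g i k₀ - g i₀ k₀, fun k => g i₀ k, fun i k => ?_⟩
  rw [sub_add_eq_add_sub, eq_sub_iff_add_eq, h i i₀ k k₀]

lemma log_mul_sub_le_mul_log_sub_one_sub {x y : ℝ} (hx : 0 < x) (hy : 0 < y) :
    log x * (y - x) ≤ y * (log y - 1) - x * (log x - 1) := by
  have h := one_sub_inv_le_log_of_pos (div_pos hy hx)
  rw [log_div hy.ne' hx.ne', inv_div] at h
  have := mul_le_mul_of_nonneg_left h hy.le
  rw [mul_sub, mul_one, mul_div_cancel₀ _ hy.ne'] at this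
  linarith

lemma hasDerivAt_mul_log_sub_one {x : ℝ} (hx : x ≠ 0) :
    HasDerivAt (fun y => y * (log y - 1)) (log x) x := by
  have h := (hasDerivAt_mul_log hx).fun_sub (hasDerivAt_id' x)
  rw [add_sub_cancel_right] at h
  exact h.congr_of_eventuallyEq (.of_forall fun y => by ring)

lemma eq_exp_div_iff {x a c ε : ℝ} (hx : 0 < x) (hε : ε ≠ 0) :
    x = exp ((a - c) / ε) ↔ c + ε * log x = a := by
  constructor
  · rintro rfl
    rw [log_exp, mul_div_cancel₀ _ hε]
    ring
  · rintro rfl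
    rw [add_sub_cancel_left, mul_div_cancel_left₀ _ hε, exp_log hx]

noncomputable section

variable {I K : Type*} [Fintype I] [Fintype K]

def entropicCost (c : I → K → ℝ) (ε : ℝ) (X : I → K → ℝ) : ℝ :=
  (∑ i, ∑ k, c i k * X i k) + ε * ∑ i, ∑ k, X i k * (log (X i k) - 1)

lemma sum_mul_sub_le_entropicCost_sub (c : I → K → ℝ) {ε : ℝ} (hε : 0 ≤ ε)
    {X Y : I → K → ℝ} (hX : ∀ i k, 0 < X i k) (hY : ∀ i k, 0 < Y i k) :
    ∑ i, ∑ k, (c i k + ε * log (X i k)) * (Y i k - X i k) ≤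
      entropicCost c ε Y - entropicCost c ε X := by
  have key : ∀ i k, (c i k + ε * log (X i k)) * (Y i k - X i k) ≤
      (c i k * Y i k + ε * (Y i k * (log (Y i k) - 1))) -
        (c i k * X i k + ε * (X i k * (log (X i k) - 1))) := fun i k => by
    linear_combination mul_le_mul_of_nonneg_left
      (log_mul_sub_le_mul_log_sub_one_sub (hX i k) (hY i k)) hε
  calc _ ≤ ∑ i, ∑ k, ((c i k * Y i k + ε * (Y i k * (log (Y i k) - 1))) -
        (c i k * X i k + ε * (X i k * (log (X i k) - 1)))) :=
        sum_le_sum fun i _ => sum_le_sum fun k _ => key i k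
    _ = _ := by
      simp only [entropicCost, mul_sum, ← sum_sub_distrib, ← sum_add_distrib]

lemma hasDerivAt_entropicCost_add_smul (c : I → K → ℝ) (ε : ℝ) {X : I → K → ℝ}
    (hX : ∀ i k, 0 < X i k) (E : I → K → ℝ) :
    HasDerivAt (fun t : ℝ => entropicCost c ε (X + t • E))
      (∑ i, ∑ k, (c i k + ε * log (X i k)) * E i k) 0 := by
  have hline : ∀ i k, HasDerivAt (fun t : ℝ => X i k + t * E i k) (E i k) 0 := fun i k => by
    simpa using ((hasDerivAt_id (0 : ℝ)).mul_const (E i k)).const_add (X i k)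
  have hent : ∀ i k, HasDerivAt (fun t : ℝ => (X i k + t * E i k) *
      (log (X i k + t * E i k) - 1)) (log (X i k) * E i k) 0 := fun i k =>
    (hasDerivAt_mul_log_sub_one (hX i k).ne').comp_of_eq 0 (hline i k) (by simp)
  have hlin := HasDerivAt.fun_sum (u := univ) fun i _ =>
    HasDerivAt.fun_sum (u := univ) fun k _ => (hline i k).const_mul (c i k)
  have hH := HasDerivAt.fun_sum (u := univ) fun i _ =>
    HasDerivAt.fun_sum (u := univ) fun k _ => hent i k
  refine ((hlin.fun_add (hH.const_mul ε)).congr_deriv ?_).congr_of_eventuallyEq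
    (.of_forall fun t => rfl)
  simp only [add_mul, mul_sum, sum_add_distrib, mul_assoc]

def ZeroMarginals (D : I → K → ℝ) : Prop :=
  (∀ i, ∑ k, D i k = 0) ∧ ∀ k, ∑ i, D i k = 0

lemma zeroMarginals_mul {u : I → ℝ} {v : K → ℝ} (hu : ∑ i, u i = 0) (hv : ∑ k, v k = 0) :
    ZeroMarginals fun i k => u i * v k :=
  ⟨fun i => by rw [← mul_sum, hv, mul_zero], fun k => by rw [← sum_mul, hu, zero_mul]⟩

lemma ZeroMarginals.sum_add_mul_eq_zero {D : I → K → ℝ} (hD : ZeroMarginals D)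
    (α : I → ℝ) (β : K → ℝ) : ∑ i, ∑ k, (α i + β k) * D i k = 0 := by
  simp only [add_mul, sum_add_distrib, ← mul_sum, hD.1, mul_zero, zero_add]
  rw [sum_comm]
  simp only [← mul_sum, hD.2, mul_zero, sum_const_zero]

lemma sum_apply_eq_zero_of_forall_ne {D : I → K → ℝ} (hrow : ∀ i, ∑ k, D i k = 0) {k₀ : K}
    (hcol : ∀ k ≠ k₀, ∑ i, D i k = 0) : ∑ i, D i k₀ = 0 := by
  classical
  have htot : ∑ k, ∑ i, D i k = 0 := by rw [sum_comm]; simp [hrow]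
  rwa [← add_sum_erase _ _ (mem_univ k₀),
    sum_eq_zero fun k hk => hcol k (ne_of_mem_erase hk), add_zero] at htot

lemma sum_mul_single_sub_single [DecidableEq I] [DecidableEq K] (g : I → K → ℝ)
    (i j : I) (k l : K) :
    ∑ i', ∑ k', g i' k' * ((Pi.single i 1 - Pi.single j 1 : I → ℝ) i' *
      (Pi.single k 1 - Pi.single l 1 : K → ℝ) k') = g i k - g i l - (g j k - g j l) := by
  simp only [Pi.sub_apply, Pi.single_apply, mul_sub, mul_ite, mul_one, mul_zero,
    sum_sub_distrib, sum_ite_eq', mem_univ, ↓reduceIte]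
  ring

def posTransportPolytope (I : Type*) [Fintype I] (m : ℕ) : Set (I → Fin m → ℝ) :=
  {X | (∀ i k, 0 < X i k) ∧ (∀ i, ∑ k, X i k = 1) ∧
    (∀ k : Fin m, (k : ℕ) < m - 1 → ∑ i, X i k = 1)}

variable {m : ℕ}

lemma zeroMarginals_sub_of_mem {X Y : I → Fin m → ℝ}
    (hX : X ∈ posTransportPolytope I m) (hY : Y ∈ posTransportPolytope I m) :
    ZeroMarginals (Y - X) := by
  have hrow : ∀ i, ∑ k, (Y - X) i k = 0 := fun i => by
    simp [sum_sub_distrib, hX.2.1, hY.2.1]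
  refine ⟨hrow, fun k => ?_⟩
  by_cases hk : (k : ℕ) < m - 1
  · simp [sum_sub_distrib, hX.2.2 k hk, hY.2.2 k hk]
  refine sum_apply_eq_zero_of_forall_ne hrow fun j hj => ?_
  have hj' : (j : ℕ) < m - 1 := by have := Fin.val_ne_of_ne hj; omega
  simp [sum_sub_distrib, hX.2.2 j hj', hY.2.2 j hj']

lemma eventually_add_smul_mem_posTransportPolytope {X E : I → Fin m → ℝ}
    (hX : X ∈ posTransportPolytope I m) (hE : ZeroMarginals E) :
    ∀ᶠ t in 𝓝 (0 : ℝ), X + t • E ∈ posTransportPolytope I m := by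
  have hpos : ∀ᶠ t in 𝓝 (0 : ℝ), ∀ i k, 0 < X i k + t * E i k := by
    simp only [eventually_all]
    intro i k
    have hcont : Continuous fun t : ℝ => X i k + t * E i k := by fun_prop
    exact continuousAt_const.eventually_lt hcont.continuousAt (by simpa using hX.1 i k)
  filter_upwards [hpos] with t ht
  refine ⟨by simpa using ht, fun i => ?_, fun k hk => ?_⟩
  · simp [sum_add_distrib, ← mul_sum, hX.2.1, hE.1]
  · simp [sum_add_distrib, ← mul_sum, hX.2.2 k hk, hE.2]

lemma sum_mul_eq_zero_of_isMinOn {c : I → Fin m → ℝ} {ε : ℝ} {X E : I → Fin m → ℝ}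
    (hX : X ∈ posTransportPolytope I m)
    (hmin : IsMinOn (entropicCost c ε) (posTransportPolytope I m) X) (hE : ZeroMarginals E) :
    ∑ i, ∑ k, (c i k + ε * log (X i k)) * E i k = 0 := by
  have hloc : IsLocalMin (fun t : ℝ => entropicCost c ε (X + t • E)) 0 := by
    filter_upwards [eventually_add_smul_mem_posTransportPolytope hX hE] with t ht
    simpa using hmin ht
  exact hloc.hasDerivAt_eq_zero (hasDerivAt_entropicCost_add_smul c ε hX.1 E)

theorem isMinOn_entropicCost_iff (c : I → Fin m → ℝ) {ε : ℝ} (hε : 0 ≤ ε)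
    {X : I → Fin m → ℝ} (hX : X ∈ posTransportPolytope I m) :
    IsMinOn (entropicCost c ε) (posTransportPolytope I m) X ↔
      ∃ (α : I → ℝ) (β : Fin m → ℝ), ∀ i k, c i k + ε * log (X i k) = α i + β k := by
  classical
  constructor
  · intro hmin
    refine exists_eq_add_of_add_eq_add _ fun i j k l => ?_
    have hcross := sum_mul_eq_zero_of_isMinOn hX hmin
      (zeroMarginals_mul (u := Pi.single i 1 - Pi.single j 1)
        (v := Pi.single k 1 - Pi.single l 1) (by simp) (by simp))
    rw [sum_mul_single_sub_single] at hcross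
    linear_combination hcross
  · rintro ⟨α, β, hgrad⟩
    refine isMinOn_iff.mpr fun Y hY => ?_
    have hdescent := sum_mul_sub_le_entropicCost_sub c hε hX.1 hY.1
    have hzero := (zeroMarginals_sub_of_mem hX hY).sum_add_mul_eq_zero α β
    simp only [hgrad] at hdescent
    simp only [Pi.sub_apply] at hzero
    linarith

end

theorem entropic_ot_dual_characterization
    {I : Type*} [Fintype I] (m : ℕ) (ε : ℝ) (hε : 0 < ε)
    (c : I → Fin m → ℝ)
    (P : Set (I → Fin m → ℝ))
    (hP : P = {X | (∀ i k, 0 < X i k) ∧ (∀ i, ∑ k, X i k = 1) ∧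
        (∀ k : Fin m, (k : ℕ) < m - 1 → ∑ i, X i k = 1)})
    (f : (I → Fin m → ℝ) → ℝ)
    (hf : ∀ X, f X = (∑ i, ∑ k, c i k * X i k) +
        ε * ∑ i, ∑ k, X i k * (Real.log (X i k) - 1))
    (X : I → Fin m → ℝ) :
    (X ∈ P ∧ ∀ Y ∈ P, f X ≤ f Y) ↔
    (X ∈ P ∧ ∃ α : I → ℝ, ∃ β : Fin m → ℝ,
      ∀ i k, X i k = Real.exp ((α i + β k - c i k) / ε)) := by
  obtain rfl : P = posTransportPolytope I m := hP
  obtain rfl : f = entropicCost c ε := funext hf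
  refine and_congr_right fun hX => ?_
  rw [← isMinOn_iff, isMinOn_entropicCost_iff c hε.le hX]
  simp only [eq_exp_div_iff (hX.1 _ _) hε.ne']
end
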